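/- Let Ω = ℝ³ ∖ D̄ be the exterior of a bounded Lipschitz domain D ⊂ B(x₀,r). Then the trace inequality ‖u‖_{L²(∂Ω)} ≤ C‖∇u‖_{L²(Ω)} holds for all u ∈ Y^{1,2}(Ω), where Y^{1,2}(Ω) = {u ∈ L⁶(Ω) : ∇u ∈ L²(Ω)}. -/

import Mathlib

open MeasureTheory Matrix

/-- Gradient of a scalar field on `ℝ³`. -/
noncomputable def grad3 (u : (Fin 3 → ℝ) → ℝ) (x : Fin 3 → ℝ) : Fin 3 → ℝ :=
  fun i => fderiv ℝ u x (Pi.single i 1)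

/-- `u ∈ Y^{1,2}(Ω)`: `u ∈ L⁶(Ω)` with weak gradient in `L²(Ω)` (represented by a
differentiable representative). -/
def MemY12 (Ω : Set (Fin 3 → ℝ)) (u : (Fin 3 → ℝ) → ℝ) : Prop :=
  Differentiable ℝ u ∧ MemLp u 6 (volume.restrict Ω) ∧
    MemLp (fun x => grad3 u x) 2 (volume.restrict Ω)

/-!
The trace inequality on the bounded set `Ω ∩ B(x₀, 2r)` bounds `‖u‖²_{L²(∂Ω)}` by the squared
`L²` norms of `u` and `∇u` on that set. The gradient term is at most `‖∇u‖²_{L²(Ω)}`; the other is,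
by Hölder on a set of finite volume, at most `|Ω ∩ B(x₀, 2r)|^{2/3} ‖u‖²_{L⁶(Ω)}`, and the Sobolev
inequality bounds this by a multiple of `‖∇u‖²_{L²(Ω)}`.
-/

namespace MeasureTheory

variable {α : Type*} [MeasurableSpace α] {μ : Measure α}

theorem MemLp.integrable_dotProduct_self {ι : Type*} [Fintype ι] {f : α → ι → ℝ}
    (hf : MemLp f 2 μ) : Integrable (fun x => f x ⬝ᵥ f x) μ := by
  simp only [dotProduct]
  exact integrable_finsetSum _ fun i _ => by simpa only [sq] using (hf.eval i).integrable_sq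

theorem integral_le_integral_rpow_mul_measureReal_univ [IsFiniteMeasure μ] {p : ℝ} (hp : 1 < p)
    {f : α → ℝ} (hf₀ : 0 ≤ᵐ[μ] f) (hf : MemLp f (ENNReal.ofReal p) μ) :
    ∫ x, f x ∂μ ≤ (∫ x, f x ^ p ∂μ) ^ (1 / p) * μ.real Set.univ ^ (1 - 1 / p) := by
  have hpq := Real.HolderConjugate.conjExponent hp
  have h := integral_mul_le_Lp_mul_Lq_of_nonneg hpq hf₀ (ae_of_all _ fun _ => zero_le_one)
    hf (memLp_const 1)
  simpa only [mul_one, Real.one_rpow, integral_const, smul_eq_mul, one_div, hpq.one_sub_inv]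
    using h

theorem integral_sq_le_of_memLp_six [IsFiniteMeasure μ] {u : α → ℝ} (hu : MemLp u 6 μ) :
    ∫ x, u x ^ 2 ∂μ ≤
      (∫ x, |u x| ^ (6 : ℝ) ∂μ) ^ ((1 : ℝ) / 3) * μ.real Set.univ ^ ((2 : ℝ) / 3) := by
  have hu2 : MemLp (fun x => u x ^ 2) (ENNReal.ofReal 3) μ := by
    rw [show ENNReal.ofReal 3 = 6 / 2 by
      rw [ENNReal.ofReal_ofNat, ENNReal.eq_div_iff two_ne_zero ENNReal.ofNat_ne_top]; norm_num]
    simpa using hu.norm_rpow_div 2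
  have h := integral_le_integral_rpow_mul_measureReal_univ (by norm_num : (1 : ℝ) < 3)
    (ae_of_all _ fun x => sq_nonneg (u x)) hu2
  have hpow : ∀ x, (u x ^ 2) ^ (3 : ℝ) = |u x| ^ (6 : ℝ) := fun x => by
    rw [← sq_abs, ← Real.rpow_natCast, ← Real.rpow_mul (abs_nonneg _)]
    norm_num
  norm_num [hpow] at h ⊢
  exact h

theorem setIntegral_sq_le_of_integral_rpow_six_le {s t : Set α} (hst : s ⊆ t) (hs : μ s ≠ ⊤)
    {u : α → ℝ} (hu : MemLp u 6 (μ.restrict t)) {C G : ℝ} (hG : 0 ≤ G)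
    (hC : (∫ x in t, |u x| ^ (6 : ℝ) ∂μ) ^ ((1 : ℝ) / 6) ≤ C * G ^ ((1 : ℝ) / 2)) :
    ∫ x in s, u x ^ 2 ∂μ ≤ C ^ 2 * μ.real s ^ ((2 : ℝ) / 3) * G := by
  have : IsFiniteMeasure (μ.restrict s) := isFiniteMeasure_restrict.mpr hs
  have hpow_nonneg : ∀ x, 0 ≤ |u x| ^ (6 : ℝ) := fun x => Real.rpow_nonneg (abs_nonneg _) _
  have hst_int : ∫ x in s, |u x| ^ (6 : ℝ) ∂μ ≤ ∫ x in t, |u x| ^ (6 : ℝ) ∂μ :=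
    setIntegral_mono_set
      (by simpa [IntegrableOn] using hu.integrable_norm_rpow (by norm_num) (by norm_num))
      (ae_of_all _ hpow_nonneg) hst.eventuallyLE
  have hC_sq : (∫ x in t, |u x| ^ (6 : ℝ) ∂μ) ^ ((1 : ℝ) / 3) ≤ C ^ 2 * G := by
    have hF : 0 ≤ ∫ x in t, |u x| ^ (6 : ℝ) ∂μ := integral_nonneg fun x => hpow_nonneg x
    calc (∫ x in t, |u x| ^ (6 : ℝ) ∂μ) ^ ((1 : ℝ) / 3)
        = ((∫ x in t, |u x| ^ (6 : ℝ) ∂μ) ^ ((1 : ℝ) / 6)) ^ 2 := by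
          rw [← Real.rpow_natCast, ← Real.rpow_mul hF]; norm_num
      _ ≤ (C * G ^ ((1 : ℝ) / 2)) ^ 2 := pow_le_pow_left₀ (Real.rpow_nonneg hF _) hC 2
      _ = C ^ 2 * G := by
          rw [mul_pow, ← Real.rpow_natCast (G ^ _), ← Real.rpow_mul hG]; norm_num
  calc ∫ x in s, u x ^ 2 ∂μ
      ≤ (∫ x in s, |u x| ^ (6 : ℝ) ∂μ) ^ ((1 : ℝ) / 3) * μ.real s ^ ((2 : ℝ) / 3) := by
        simpa using integral_sq_le_of_memLp_six (hu.mono_measure (Measure.restrict_mono hst le_rfl))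
    _ ≤ (∫ x in t, |u x| ^ (6 : ℝ) ∂μ) ^ ((1 : ℝ) / 3) * μ.real s ^ ((2 : ℝ) / 3) := by
        gcongr
    _ ≤ C ^ 2 * G * μ.real s ^ ((2 : ℝ) / 3) := by gcongr
    _ = C ^ 2 * μ.real s ^ ((2 : ℝ) / 3) * G := by ring

end MeasureTheory

theorem exterior_domain_trace_inequality_general
    (x₀ : Fin 3 → ℝ) (r : ℝ)
    (Ω : Set (Fin 3 → ℝ))
    (σ : Measure (Fin 3 → ℝ))
    -- Sobolev inequality ‖u‖_{L⁶(Ω)} ≤ C_S ‖∇u‖_{L²(Ω)} on the exterior domain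
    (CS : ℝ) (hSobolev : ∀ u : (Fin 3 → ℝ) → ℝ, MemY12 Ω u →
      (∫ x in Ω, |u x| ^ (6 : ℝ)) ^ ((1 : ℝ) / 6)
        ≤ CS * (∫ x in Ω, grad3 u x ⬝ᵥ grad3 u x) ^ ((1 : ℝ) / 2))
    -- usual trace inequality for the bounded Lipschitz domain Ω ∩ B(x₀, 2r)
    (Ctr : ℝ) (htrace : ∀ w : (Fin 3 → ℝ) → ℝ, Differentiable ℝ w →
      (∫ x in frontier Ω, (w x) ^ 2 ∂σ)
        ≤ Ctr * ((∫ x in Ω ∩ Metric.ball x₀ (2 * r), (w x) ^ 2)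
          + ∫ x in Ω ∩ Metric.ball x₀ (2 * r), grad3 w x ⬝ᵥ grad3 w x)) :
    ∃ C : ℝ, ∀ u : (Fin 3 → ℝ) → ℝ, MemY12 Ω u →
      (∫ x in frontier Ω, (u x) ^ 2 ∂σ) ^ ((1 : ℝ) / 2)
        ≤ C * (∫ x in Ω, grad3 u x ⬝ᵥ grad3 u x) ^ ((1 : ℝ) / 2) := by
  set Ω₂ := Ω ∩ Metric.ball x₀ (2 * r)
  set K := |Ctr| * (CS ^ 2 * volume.real Ω₂ ^ ((2 : ℝ) / 3) + 1)
  refine ⟨K ^ ((1 : ℝ) / 2), fun u hu => ?_⟩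
  have hgrad_nonneg : ∀ x, 0 ≤ grad3 u x ⬝ᵥ grad3 u x := fun x => dotProduct_star_self_nonneg _
  set G := ∫ x in Ω, grad3 u x ⬝ᵥ grad3 u x
  have hG : 0 ≤ G := integral_nonneg hgrad_nonneg
  have hgrad_local : ∫ x in Ω₂, grad3 u x ⬝ᵥ grad3 u x ≤ G :=
    setIntegral_mono_set hu.2.2.integrable_dotProduct_self (ae_of_all _ hgrad_nonneg)
      Set.inter_subset_left.eventuallyLE
  have hu_local : ∫ x in Ω₂, u x ^ 2 ≤ CS ^ 2 * volume.real Ω₂ ^ ((2 : ℝ) / 3) * G :=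
    setIntegral_sq_le_of_integral_rpow_six_le Set.inter_subset_left
      (measure_mono Set.inter_subset_right |>.trans_lt measure_ball_lt_top).ne hu.2.1 hG
      (hSobolev u hu)
  have htrace_u : ∫ x in frontier Ω, u x ^ 2 ∂σ ≤ K * G := calc
    _ ≤ Ctr * ((∫ x in Ω₂, u x ^ 2) + ∫ x in Ω₂, grad3 u x ⬝ᵥ grad3 u x) := htrace u hu.1
    _ ≤ |Ctr| * ((∫ x in Ω₂, u x ^ 2) + ∫ x in Ω₂, grad3 u x ⬝ᵥ grad3 u x) :=
        mul_le_mul_of_nonneg_right (le_abs_self _)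
          (add_nonneg (integral_nonneg fun _ => sq_nonneg _) (integral_nonneg hgrad_nonneg))
    _ ≤ |Ctr| * (CS ^ 2 * volume.real Ω₂ ^ ((2 : ℝ) / 3) * G + G) := by gcongr
    _ = K * G := by ring
  calc (∫ x in frontier Ω, u x ^ 2 ∂σ) ^ ((1 : ℝ) / 2) ≤ (K * G) ^ ((1 : ℝ) / 2) :=
        Real.rpow_le_rpow (integral_nonneg fun _ => sq_nonneg _) htrace_u (by norm_num)
    _ = K ^ ((1 : ℝ) / 2) * G ^ ((1 : ℝ) / 2) := Real.mul_rpow (by positivity) hG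

/-- Let `Ω = ℝ³ ∖ D̄` be the exterior of a bounded Lipschitz domain
`D ⊂ B(x₀, r)`.  Then the trace inequality `‖u‖_{L²(∂Ω)} ≤ C ‖∇u‖_{L²(Ω)}` holds for all
`u ∈ Y^{1,2}(Ω)`.  Here `σ` is the surface measure on `∂Ω`; the Sobolev inequality on `Ω`
and the usual trace inequality on the truncated bounded Lipschitz domain
`Ω_{2r} = Ω ∩ B(x₀, 2r)` are assumed, as in the paper. -/
theorem exterior_domain_trace_inequality
    (D : Set (Fin 3 → ℝ)) (hDopen : IsOpen D) (hDbd : Bornology.IsBounded D)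
    (x₀ : Fin 3 → ℝ) (r : ℝ) (hr : 0 < r) (hDr : D ⊆ Metric.ball x₀ r)
    (Ω : Set (Fin 3 → ℝ)) (hΩ : Ω = (closure D)ᶜ)
    (σ : Measure (Fin 3 → ℝ)) (hσfin : σ (frontier Ω) ≠ ⊤)
    -- Sobolev inequality ‖u‖_{L⁶(Ω)} ≤ C_S ‖∇u‖_{L²(Ω)} on the exterior domain
    (CS : ℝ) (hSobolev : ∀ u : (Fin 3 → ℝ) → ℝ, MemY12 Ω u →
      (∫ x in Ω, |u x| ^ (6 : ℝ)) ^ ((1 : ℝ) / 6)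
        ≤ CS * (∫ x in Ω, grad3 u x ⬝ᵥ grad3 u x) ^ ((1 : ℝ) / 2))
    -- usual trace inequality for the bounded Lipschitz domain Ω ∩ B(x₀, 2r)
    (Ctr : ℝ) (htrace : ∀ w : (Fin 3 → ℝ) → ℝ, Differentiable ℝ w →
      (∫ x in frontier Ω, (w x) ^ 2 ∂σ)
        ≤ Ctr * ((∫ x in Ω ∩ Metric.ball x₀ (2 * r), (w x) ^ 2)
          + ∫ x in Ω ∩ Metric.ball x₀ (2 * r), grad3 w x ⬝ᵥ grad3 w x)) :
    ∃ C : ℝ, ∀ u : (Fin 3 → ℝ) → ℝ, MemY12 Ω u →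
      (∫ x in frontier Ω, (u x) ^ 2 ∂σ) ^ ((1 : ℝ) / 2)
        ≤ C * (∫ x in Ω, grad3 u x ⬝ᵥ grad3 u x) ^ ((1 : ℝ) / 2) :=
  exterior_domain_trace_inequality_general x₀ r Ω σ CS hSobolev Ctr htrace
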